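/- arXiv:2004.04314 — 3 statements merged into one kernel-verified Lean document; each statement's English description precedes it below -/
import Mathlib

section
/- The function g₂(y) = (2^y − 1)² − 2·(2^y − 1)·2^y·(ln 2)·y + (ln 2)²·2^y·y² satisfies g₂(y) ≤ 0 for all y ≥ 0. -/
open Real

theorem g2_nonpos (y : ℝ) (hy : 0 ≤ y) :
    ((2 : ℝ) ^ y - 1) ^ 2 - 2 * ((2 : ℝ) ^ y - 1) * (2 : ℝ) ^ y * Real.log 2 * y
      + (Real.log 2) ^ 2 * (2 : ℝ) ^ y * y ^ 2 ≤ 0 := by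
  have hlog : 0 < Real.log 2 := Real.log_pos (by norm_num)
  set t : ℝ := Real.log 2 * y with ht
  have ht0 : 0 ≤ t := mul_nonneg hlog.le hy
  have hE : (2 : ℝ) ^ y = Real.exp t := by
    rw [Real.rpow_def_of_pos (by norm_num : (0:ℝ) < 2)]
  set E : ℝ := Real.exp t with hEdef
  have hEpos : 0 < E := Real.exp_pos t
  have h1 : 1 + t ≤ E := by have := Real.add_one_le_exp t; linarith
  have h2 : (1 - t) * E ≤ 1 := by
    have h := Real.add_one_le_exp (-t)
    have h' := mul_le_mul_of_nonneg_right h hEpos.le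
    rw [← Real.exp_add, neg_add_cancel, Real.exp_zero] at h'
    linarith [h']
  -- factorization: g₂ = (tE - E + 1)(t - E + 1) - t(E-1)²
  have hfac : (t * E - E + 1) * (t - E + 1) ≤ 0 :=
    mul_nonpos_of_nonneg_of_nonpos (by nlinarith) (by nlinarith)
  have htsq : 0 ≤ t * (E - 1) ^ 2 := mul_nonneg ht0 (sq_nonneg _)
  have key : (E - 1) ^ 2 - 2 * (E - 1) * E * t + t ^ 2 * E ≤ 0 := by nlinarith [hfac, htsq]
  rw [hE]
  calc (E - 1) ^ 2 - 2 * (E - 1) * E * Real.log 2 * y + (Real.log 2) ^ 2 * E * y ^ 2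
      = (E - 1) ^ 2 - 2 * (E - 1) * E * t + t ^ 2 * E := by rw [ht]; ring
    _ ≤ 0 := key
end

section
/- For β > 0 and f(x) = x·(2^(β/x) − 1), the quantity (f'(x))² − f(x)·f''(x) is ≤ 0 for all x > 0; consequently the function g₁(x) = f(x)/f'(x) is non-increasing on (0, ∞). -/
/-!
Write `2 ^ (β / x) = exp (c / x)` with `c = β log 2` and `u = c / x`. Then `f' = exp u - 1 - u exp u`
and `f f'' = u² exp u (exp u - 1)`. The two tangent-line bounds `1 + u ≤ exp u` and
`1 - u ≤ exp (-u)` give `0 ≤ u exp u - (exp u - 1) ≤ u (exp u - 1)`, so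
`f'² ≤ u² (exp u - 1)² ≤ f f''`. Since moreover `f' < 0`, the derivative
`(f'² - f f'') / f'²` of `f / f'` is nonpositive.
-/

open Real Set

lemma one_sub_mul_exp_le (u : ℝ) : (1 - u) * exp u ≤ 1 := by
  have h := mul_le_mul_of_nonneg_right (add_one_le_exp (-u)) (exp_pos u).le
  rwa [← exp_add, neg_add_cancel, exp_zero, neg_add_eq_sub] at h

lemma one_sub_mul_exp_lt {u : ℝ} (hu : u ≠ 0) : (1 - u) * exp u < 1 := by
  have h := mul_lt_mul_of_pos_right (add_one_lt_exp (neg_ne_zero.mpr hu)) (exp_pos u)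
  rwa [← exp_add, neg_add_cancel, exp_zero, neg_add_eq_sub] at h

lemma sq_exp_sub_one_sub_mul_exp_le {u : ℝ} (hu : 0 ≤ u) :
    (exp u - 1 - u * exp u) ^ 2 ≤ u ^ 2 * exp u * (exp u - 1) := by
  have hlow : 0 ≤ u * exp u - (exp u - 1) := by linarith [one_sub_mul_exp_le u]
  have hupp : u * exp u - (exp u - 1) ≤ u * (exp u - 1) := by linarith [add_one_le_exp u]
  have hexp : 0 ≤ exp u - 1 := by linarith [add_one_le_exp u]
  calc (exp u - 1 - u * exp u) ^ 2 = (u * exp u - (exp u - 1)) ^ 2 := by ring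
    _ ≤ (u * (exp u - 1)) ^ 2 := pow_le_pow_left₀ hlow hupp 2
    _ = u ^ 2 * (exp u - 1) * (exp u - 1) := by ring
    _ ≤ u ^ 2 * exp u * (exp u - 1) := by gcongr; linarith

lemma antitoneOn_div_deriv {f : ℝ → ℝ} {s : Set ℝ} (hconv : Convex ℝ s) (hopen : IsOpen s)
    (hf : ∀ x ∈ s, DifferentiableAt ℝ f x) (hf' : ∀ x ∈ s, DifferentiableAt ℝ (deriv f) x)
    (hne : ∀ x ∈ s, deriv f x ≠ 0)
    (hsq : ∀ x ∈ s, deriv f x ^ 2 - f x * deriv (deriv f) x ≤ 0) :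
    AntitoneOn (fun x => f x / deriv f x) s := by
  have hquot : ∀ x ∈ s, HasDerivAt (fun x => f x / deriv f x)
      ((deriv f x * deriv f x - f x * deriv (deriv f) x) / deriv f x ^ 2) x :=
    fun x hx => (hf x hx).hasDerivAt.div (hf' x hx).hasDerivAt (hne x hx)
  refine antitoneOn_of_deriv_nonpos hconv
    (fun x hx => (hquot x hx).continuousAt.continuousWithinAt) ?_ ?_ <;> rw [hopen.interior_eq]
  · exact fun x hx => (hquot x hx).differentiableAt.differentiableWithinAt
  · intro x hx
    rw [(hquot x hx).deriv, ← sq]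
    exact div_nonpos_of_nonpos_of_nonneg (hsq x hx) (sq_nonneg _)

section MulExpDivSubOne

variable (c : ℝ) {x : ℝ}

lemma hasDerivAt_mul_exp_div_sub_one (hx : x ≠ 0) :
    HasDerivAt (fun x => x * (exp (c / x) - 1)) (exp (c / x) - 1 - c / x * exp (c / x)) x := by
  have hcx : HasDerivAt (fun x => c / x) (-(c / x ^ 2)) x := by
    simpa [div_eq_mul_inv] using (hasDerivAt_inv hx).const_mul c
  refine ((hasDerivAt_id' x).mul (hcx.exp.sub_const 1)).congr_deriv ?_
  field_simp
  ring

lemma hasDerivAt_exp_div_sub_one_sub_mul_exp_div (hx : x ≠ 0) :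
    HasDerivAt (fun x => exp (c / x) - 1 - c / x * exp (c / x))
      ((c / x) ^ 2 * exp (c / x) / x) x := by
  have hcx : HasDerivAt (fun x => c / x) (-(c / x ^ 2)) x := by
    simpa [div_eq_mul_inv] using (hasDerivAt_inv hx).const_mul c
  refine ((hcx.exp.sub_const 1).sub (hcx.mul hcx.exp)).congr_deriv ?_
  field_simp
  ring

lemma deriv_mul_exp_div_sub_one_eventuallyEq (hx : x ≠ 0) :
    deriv (fun x => x * (exp (c / x) - 1)) =ᶠ[nhds x]
      fun x => exp (c / x) - 1 - c / x * exp (c / x) := by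
  filter_upwards [eventually_ne_nhds hx] with y hy
  exact (hasDerivAt_mul_exp_div_sub_one c hy).deriv

lemma hasDerivAt_deriv_mul_exp_div_sub_one (hx : x ≠ 0) :
    HasDerivAt (deriv fun x => x * (exp (c / x) - 1)) ((c / x) ^ 2 * exp (c / x) / x) x :=
  (hasDerivAt_exp_div_sub_one_sub_mul_exp_div c hx).congr_of_eventuallyEq
    (deriv_mul_exp_div_sub_one_eventuallyEq c hx)

lemma deriv_mul_exp_div_sub_one_neg {c : ℝ} (hc : 0 < c) (hx : 0 < x) :
    deriv (fun x => x * (exp (c / x) - 1)) x < 0 := by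
  rw [(hasDerivAt_mul_exp_div_sub_one c hx.ne').deriv]
  linarith [one_sub_mul_exp_lt (div_pos hc hx).ne']

lemma sq_deriv_sub_mul_deriv_deriv_mul_exp_div_sub_one_nonpos {c : ℝ} (hc : 0 ≤ c)
    (hx : 0 < x) :
    deriv (fun x => x * (exp (c / x) - 1)) x ^ 2
      - x * (exp (c / x) - 1) * deriv (deriv fun x => x * (exp (c / x) - 1)) x ≤ 0 := by
  rw [(hasDerivAt_mul_exp_div_sub_one c hx.ne').deriv,
    (hasDerivAt_deriv_mul_exp_div_sub_one c hx.ne').deriv]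
  have hff'' : x * (exp (c / x) - 1) * ((c / x) ^ 2 * exp (c / x) / x)
      = (c / x) ^ 2 * exp (c / x) * (exp (c / x) - 1) := by
    field_simp
  rw [hff'']
  linarith [sq_exp_sub_one_sub_mul_exp_le (div_nonneg hc hx.le)]

end MulExpDivSubOne

theorem f_ratio_antitone (β : ℝ) (hβ : 0 < β) :
    (∀ x : ℝ, 0 < x →
      (deriv (fun x : ℝ => x * ((2 : ℝ) ^ (β / x) - 1)) x) ^ 2
        - (x * ((2 : ℝ) ^ (β / x) - 1))
          * deriv (deriv (fun x : ℝ => x * ((2 : ℝ) ^ (β / x) - 1))) x ≤ 0) ∧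
    AntitoneOn
      (fun x : ℝ => (x * ((2 : ℝ) ^ (β / x) - 1))
        / deriv (fun x : ℝ => x * ((2 : ℝ) ^ (β / x) - 1)) x)
      (Set.Ioi (0 : ℝ)) := by
  have hc : 0 < log 2 * β := mul_pos (log_pos one_lt_two) hβ
  have hrpow : ∀ x : ℝ, (2 : ℝ) ^ (β / x) = exp (log 2 * β / x) := fun x => by
    rw [rpow_def_of_pos two_pos, mul_div_assoc]
  simp only [hrpow]
  have hsq : ∀ x : ℝ, 0 < x → _ := fun x hx =>
    sq_deriv_sub_mul_deriv_deriv_mul_exp_div_sub_one_nonpos hc.le (x := x) hx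
  refine ⟨hsq, antitoneOn_div_deriv (convex_Ioi 0) isOpen_Ioi
    (fun x hx => (hasDerivAt_mul_exp_div_sub_one _ (ne_of_gt hx)).differentiableAt)
    (fun x hx => (hasDerivAt_deriv_mul_exp_div_sub_one _ (ne_of_gt hx)).differentiableAt)
    (fun x hx => (deriv_mul_exp_div_sub_one_neg hc hx).ne) hsq⟩
end

section
/- Let ρ : {1,…,K} → ℝ≥0 be non-decreasing (ρ₁ ≤ ρ₂ ≤ … ≤ ρ_K), η > 0, c > 0, and f : (0,1] → ℝ≥0. Consider maximizing over a ∈ {0,1}^K and b ∈ [b_min, 1]^K (with b_k = 0 allowed when a_k = 0) the objective Σ_k (η − ρ_k·c·f(b_k))·a_k subject to Σ_k b_k·a_k ≤ 1 and b_k ≥ b_min whenever a_k = 1. Then there exists an optimal solution whose selection set is a prefix: there is k* such that a_k = 1 for all k ≤ k* and a_k = 0 for all k > k*. -/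
open Real Finset

lemma strictMono_le_val' {m K : ℕ} (g : Fin m → Fin K) (hg : StrictMono g) :
    ∀ n (h : n < m), n ≤ (g ⟨n, h⟩ : ℕ) := by
  intro n
  induction n with
  | zero => intro h; exact Nat.zero_le _
  | succ n ih =>
    intro h
    have h' : n < m := Nat.lt_of_succ_lt h
    have hlt : g ⟨n, h'⟩ < g ⟨n + 1, h⟩ := hg (by simp [Fin.lt_def])
    exact Nat.succ_le_of_lt (lt_of_le_of_lt (ih h') hlt)

theorem prefix_selection_optimal (K : ℕ) (ρ : Fin K → ℝ)
    (hρnn : ∀ k, 0 ≤ ρ k) (hρmono : Monotone ρ)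
    (η c bmin : ℝ) (hη : 0 < η) (hc : 0 < c) (hbmin : 0 < bmin)
    (f : ℝ → ℝ) (hf : ∀ x : ℝ, 0 < x → x ≤ 1 → 0 ≤ f x)
    (Feasible : (Fin K → Bool) → (Fin K → ℝ) → Prop)
    (hFeasible : ∀ a b, Feasible a b ↔
      ((∑ k, (if a k then b k else 0)) ≤ 1 ∧
        ∀ k, a k = true → bmin ≤ b k ∧ b k ≤ 1))
    (Obj : (Fin K → Bool) → (Fin K → ℝ) → ℝ)
    (hObj : ∀ a b, Obj a b = ∑ k, (if a k then η - ρ k * c * f (b k) else 0))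
    (hattained : ∃ a b, Feasible a b ∧
      ∀ a' b', Feasible a' b' → Obj a' b' ≤ Obj a b) :
    ∃ a b, Feasible a b ∧
      (∀ a' b', Feasible a' b' → Obj a' b' ≤ Obj a b) ∧
      ∃ m : ℕ, ∀ k : Fin K, a k = true ↔ (k : ℕ) < m := by
  obtain ⟨a, b, hfeas, hopt⟩ := hattained
  set S : Finset (Fin K) := univ.filter (fun k => a k = true) with hS
  set m := S.card with hm
  have hmK : m ≤ K := by
    calc m ≤ (univ : Finset (Fin K)).card := card_le_card (subset_univ S)
    _ = K := by simp
  set e : Fin m → Fin K := fun i => S.orderIsoOfFin rfl i with he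
  have he_mem : ∀ i, e i ∈ S := fun i => (S.orderIsoOfFin rfl i).2
  have he_mono : StrictMono e := fun i j h => by
    exact (S.orderIsoOfFin rfl).strictMono h
  have he_le : ∀ i : Fin m, (i : ℕ) ≤ (e i : ℕ) := fun i => by
    have := strictMono_le_val' e he_mono i i.2
    simpa using this
  have ha_e : ∀ i, a (e i) = true := fun i => (mem_filter.mp (he_mem i)).2
  set a' : Fin K → Bool := fun k => decide ((k : ℕ) < m) with ha'
  set b' : Fin K → ℝ := fun k => if h : (k : ℕ) < m then b (e ⟨k, h⟩) else 0 with hb'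
  have key2 : ∀ g : Fin K → ℝ, ∑ k ∈ S, g k = ∑ i : Fin m, g (e i) := by
    intro g
    rw [← Finset.sum_coe_sort S g]
    exact (Equiv.sum_comp (S.orderIsoOfFin rfl).toEquiv (fun x => g x)).symm
  have hset : univ.filter (fun k : Fin K => (k : ℕ) < m)
      = (univ : Finset (Fin m)).map (Fin.castLEEmb hmK) := by
    ext k
    simp only [mem_filter, mem_univ, true_and, mem_map, Fin.castLEEmb_apply]
    constructor
    · intro h
      exact ⟨⟨(k : ℕ), h⟩, by ext; simp⟩
    · rintro ⟨i, -, rfl⟩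
      exact i.2
  have key1 : ∀ g : Fin K → ℝ,
      (∑ k : Fin K, (if (k : ℕ) < m then g k else 0)) = ∑ i : Fin m, g (Fin.castLE hmK i) := by
    intro g
    rw [← Finset.sum_filter, hset, Finset.sum_map]
    rfl
  have hb'e : ∀ i : Fin m, b' (Fin.castLE hmK i) = b (e i) := by
    intro i
    simp only [hb', Fin.coe_castLE, i.2, dif_pos]
  have hfeas' : Feasible a' b' := by
    rw [hFeasible]
    obtain ⟨hsum, hbox⟩ := (hFeasible a b).mp hfeas
    constructor
    · have e1 : (∑ k : Fin K, (if a' k then b' k else 0))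
          = ∑ k : Fin K, (if (k : ℕ) < m then b' k else 0) := by
        apply Finset.sum_congr rfl
        intro k _
        simp [ha']
      rw [e1, key1]
      have e2 : (∑ k : Fin K, (if a k then b k else 0)) = ∑ k ∈ S, b k := by
        rw [Finset.sum_filter]
      rw [e2, key2 b] at hsum
      calc ∑ i : Fin m, b' (Fin.castLE hmK i) = ∑ i : Fin m, b (e i) :=
            Finset.sum_congr rfl fun i _ => hb'e i
        _ ≤ 1 := hsum
    · intro k hk
      have hk' : (k : ℕ) < m := by simpa [ha'] using hk
      have e3 : b' k = b (e ⟨(k : ℕ), hk'⟩) := by simp [hb', hk']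
      rw [e3]
      exact hbox _ (ha_e ⟨(k : ℕ), hk'⟩)
  have hobj_ge : Obj a b ≤ Obj a' b' := by
    rw [hObj, hObj]
    have lhs_eq : (∑ k : Fin K, (if a k then η - ρ k * c * f (b k) else 0))
        = ∑ i : Fin m, (η - ρ (e i) * c * f (b (e i))) := by
      rw [← Finset.sum_filter]
      exact key2 _
    have rhs_eq : (∑ k : Fin K, (if a' k then η - ρ k * c * f (b' k) else 0))
        = ∑ i : Fin m, (η - ρ (Fin.castLE hmK i) * c * f (b (e i))) := by
      have e4 : (∑ k : Fin K, (if a' k then η - ρ k * c * f (b' k) else 0))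
          = ∑ k : Fin K, (if (k : ℕ) < m then η - ρ k * c * f (b' k) else 0) := by
        apply Finset.sum_congr rfl
        intro k _
        simp [ha']
      rw [e4, key1]
      exact Finset.sum_congr rfl fun i _ => by rw [hb'e i]
    rw [lhs_eq, rhs_eq]
    apply Finset.sum_le_sum
    intro i _
    have hρle : ρ (Fin.castLE hmK i) ≤ ρ (e i) := by
      apply hρmono
      rw [Fin.le_def]
      simpa using he_le i
    have hfnn : 0 ≤ f (b (e i)) := by
      obtain ⟨h1, h2⟩ := ((hFeasible a b).mp hfeas).2 _ (ha_e i)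
      exact hf _ (lt_of_lt_of_le hbmin h1) h2
    have hmul : ρ (Fin.castLE hmK i) * c * f (b (e i)) ≤ ρ (e i) * c * f (b (e i)) :=
      mul_le_mul_of_nonneg_right (mul_le_mul_of_nonneg_right hρle hc.le) hfnn
    linarith
  refine ⟨a', b', hfeas', fun a'' b'' h'' => le_trans (hopt a'' b'' h'') hobj_ge, m, ?_⟩
  intro k
  simp [ha']
end
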